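/- In a network polymatrix game, for any measurable trajectory x : [0,∞) → Δ, any t > 0, and the time-averaged strategy μ(t) = (1/t)∫_0^t x(s) ds, the total regret R(t) = Σ_k R_k(t) satisfies (1/t) R(t) ≥ SW(μ(t)) − (1/t) ∫_0^t SW(x(s)) ds; equivalently, (1/t) ∫_0^t SW(x(s)) ds ≥ SW(μ(t)) − (1/t) R(t). -/

import Mathlib

/-
STATEMENT 7: In a network polymatrix game, for any measurable trajectory
x : [0,∞) → Δ, any t > 0, and the time-averaged strategy μ(t) = (1/t)∫_0^t x(s) ds,
the total regret R(t) = Σ_k R_k(t) satisfies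
(1/t) R(t) ≥ SW(μ(t)) − (1/t)∫_0^t SW(x(s)) ds; equivalently,
(1/t)∫_0^t SW(x(s)) ds ≥ SW(μ(t)) − (1/t) R(t).
-/

open Filter Topology

noncomputable section

/-- Joint strategy space. -/
abbrev Strat {N : ℕ} (n : Fin N → ℕ) := ∀ k, Fin (n k) → ℝ

/-- `x` lies in `Δ = Δ₁ × ⋯ × Δ_N`. -/
def JointSimplex {N : ℕ} {n : Fin N → ℕ} (x : Strat n) : Prop :=
  ∀ k, x k ∈ stdSimplex ℝ (Fin (n k))

/-- Reward vector of player `k`: `r_k(x) = Σ_{(k,l)∈E} A^{kl} x_l`. -/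
def polyReward {N : ℕ} {n : Fin N → ℕ} (E : Finset (Fin N × Fin N))
    (A : ∀ k l, Matrix (Fin (n k)) (Fin (n l)) ℝ) : Strat n → Strat n :=
  fun x k i => ∑ l ∈ Finset.univ.filter (fun l => (k, l) ∈ E), ∑ j, A k l i j * x l j

/-- Payoff of player `k`: `u_k(x) = Σ_{(k,l)∈E} ⟨x_k, A^{kl} x_l⟩`. -/
def polyPayoff {N : ℕ} {n : Fin N → ℕ} (E : Finset (Fin N × Fin N))
    (A : ∀ k l, Matrix (Fin (n k)) (Fin (n l)) ℝ) (k : Fin N) (x : Strat n) : ℝ :=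
  ∑ i, x k i * polyReward E A x k i

/-- Social Welfare `SW(x) = Σ_k u_k(x)`. -/
def SW {N : ℕ} {n : Fin N → ℕ} (E : Finset (Fin N × Fin N))
    (A : ∀ k l, Matrix (Fin (n k)) (Fin (n l)) ℝ) (x : Strat n) : ℝ :=
  ∑ k, polyPayoff E A k x

/-- Regret of player `k` at time `t` along the trajectory `x`. -/
def regret {N : ℕ} {n : Fin N → ℕ} (E : Finset (Fin N × Fin N))
    (A : ∀ k l, Matrix (Fin (n k)) (Fin (n l)) ℝ) (x : ℝ → Strat n) (k : Fin N)
    (t : ℝ) : ℝ :=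
  sSup ((fun xk' => ∫ s in (0:ℝ)..t,
      (polyPayoff E A k (Function.update (x s) k xk') - polyPayoff E A k (x s))) ''
    stdSimplex ℝ (Fin (n k)))

/-- Time-averaged strategy `μ(t) = (1/t) ∫_0^t x(s) ds`. -/
def timeAvg {N : ℕ} {n : Fin N → ℕ} (x : ℝ → Strat n) (t : ℝ) : Strat n :=
  fun k i => (1 / t) * ∫ s in (0:ℝ)..t, x s k i

/-!
Each payoff `u_k(y_k, x_{-k})` is affine in the opponents' profile `x_{-k}`, so when player
`k` deviates to the constant strategy `μ_k(t)` along the trajectory, the time integral of its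
payoff is exactly `t · u_k(μ(t))`. Thus `t · u_k(μ(t)) - ∫₀ᵗ u_k(x(s)) ds` is one of the
deviation gains whose supremum is `R_k(t)`; summing over the players gives
`t · SW(μ(t)) - ∫₀ᵗ SW(x(s)) ds ≤ R(t)`.
-/

open MeasureTheory

lemma intervalIntegrable_comp_of_mapsTo_isCompact {X : Type*} [TopologicalSpace X]
    [MeasurableSpace X] [OpensMeasurableSpace X] {K : Set X} (hK : IsCompact K) {g : X → ℝ}
    (hg : Continuous g) {f : ℝ → X} (hf : Measurable f) {a b : ℝ}
    (hfK : ∀ s ∈ Set.uIoc a b, f s ∈ K) :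
    IntervalIntegrable (fun s => g (f s)) volume a b := by
  obtain ⟨C, hC⟩ := hK.exists_bound_of_continuousOn hg.continuousOn
  rw [intervalIntegrable_iff]
  exact IntegrableOn.of_bound measure_Ioc_lt_top (hg.measurable.comp hf).aestronglyMeasurable C
    ((ae_restrict_iff' measurableSet_uIoc).2 (ae_of_all _ fun s hs => hC _ (hfK s hs)))

lemma intervalIntegrable_finsetSum {ι : Type*} {s : Finset ι} {f : ι → ℝ → ℝ} {a b : ℝ}
    (h : ∀ i ∈ s, IntervalIntegrable (f i) volume a b) :
    IntervalIntegrable (fun x => ∑ i ∈ s, f i x) volume a b := by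
  simpa only [Finset.sum_fn] using IntervalIntegrable.sum s h

section PolymatrixGame

variable {N : ℕ} {n : Fin N → ℕ} (E : Finset (Fin N × Fin N))
  (A : ∀ k l, Matrix (Fin (n k)) (Fin (n l)) ℝ)

lemma isCompact_setOf_jointSimplex : IsCompact {z : Strat n | JointSimplex z} := by
  simpa [Set.pi, JointSimplex] using
    isCompact_univ_pi fun k => isCompact_stdSimplex ℝ (Fin (n k))

lemma JointSimplex.update {z : Strat n} (hz : JointSimplex z) {k : Fin N}
    {y : Fin (n k) → ℝ} (hy : y ∈ stdSimplex ℝ (Fin (n k))) :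
    JointSimplex (Function.update z k y) := by
  intro l
  rcases eq_or_ne l k with rfl | h
  · simpa using hy
  · simpa [Function.update_of_ne h] using hz l

lemma continuous_polyPayoff (k : Fin N) : Continuous (polyPayoff E A k) := by
  unfold polyPayoff polyReward
  fun_prop

lemma integral_polyReward {z : ℝ → Strat n} {t : ℝ} (ht : t ≠ 0)
    (hz : ∀ l j, IntervalIntegrable (fun s => z s l j) volume 0 t) (k : Fin N) (i : Fin (n k)) :
    ∫ s in (0:ℝ)..t, polyReward E A (z s) k i = t * polyReward E A (timeAvg z t) k i := by
  have hzl : ∀ l, IntervalIntegrable (fun s => ∑ j, A k l i j * z s l j) volume 0 t :=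
    fun l => intervalIntegrable_finsetSum fun j _ => (hz l j).const_mul _
  simp only [polyReward, timeAvg, Finset.mul_sum]
  rw [intervalIntegral.integral_finsetSum fun l _ => hzl l]
  refine Finset.sum_congr rfl fun l _ => ?_
  rw [intervalIntegral.integral_finsetSum fun j _ => (hz l j).const_mul _]
  refine Finset.sum_congr rfl fun j _ => ?_
  rw [intervalIntegral.integral_const_mul]
  field_simp

lemma integral_polyPayoff_of_forall_apply_eq {z : ℝ → Strat n} {t : ℝ} (ht : t ≠ 0)
    (hz : ∀ l j, IntervalIntegrable (fun s => z s l j) volume 0 t) {k : Fin N}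
    (hzk : ∀ s, z s k = timeAvg z t k) :
    ∫ s in (0:ℝ)..t, polyPayoff E A k (z s) = t * polyPayoff E A k (timeAvg z t) := by
  have hr : ∀ i, IntervalIntegrable (fun s => polyReward E A (z s) k i) volume 0 t :=
    fun i => intervalIntegrable_finsetSum fun l _ =>
      intervalIntegrable_finsetSum fun j _ => (hz l j).const_mul _
  simp only [polyPayoff, hzk, Finset.mul_sum]
  rw [intervalIntegral.integral_finsetSum fun i _ => (hr i).const_mul _]
  refine Finset.sum_congr rfl fun i _ => ?_
  rw [intervalIntegral.integral_const_mul, integral_polyReward E A ht hz]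
  ring

lemma timeAvg_update_const {x : ℝ → Strat n} {t : ℝ} (ht : t ≠ 0) (k : Fin N)
    (y : Fin (n k) → ℝ) :
    timeAvg (fun s => Function.update (x s) k y) t = Function.update (timeAvg x t) k y := by
  funext l j
  rcases eq_or_ne l k with rfl | h
  · simp only [timeAvg, Function.update_self, intervalIntegral.integral_const, sub_zero,
      smul_eq_mul]
    field_simp
  · simp [timeAvg, Function.update_of_ne h]

section Trajectory

variable {x : ℝ → Strat n} {t : ℝ} (hx : Measurable x)
  (hxΔ : ∀ s ∈ Set.uIcc 0 t, JointSimplex (x s))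
include hx hxΔ

lemma intervalIntegrable_apply_apply (l : Fin N) (j : Fin (n l)) :
    IntervalIntegrable (fun s => x s l j) volume 0 t :=
  intervalIntegrable_comp_of_mapsTo_isCompact (g := fun z : Strat n => z l j)
    isCompact_setOf_jointSimplex (by fun_prop) hx fun s hs => hxΔ s (Set.uIoc_subset_uIcc hs)

lemma intervalIntegrable_polyPayoff (k : Fin N) :
    IntervalIntegrable (fun s => polyPayoff E A k (x s)) volume 0 t :=
  intervalIntegrable_comp_of_mapsTo_isCompact isCompact_setOf_jointSimplex
    (continuous_polyPayoff E A k) hx fun s hs => hxΔ s (Set.uIoc_subset_uIcc hs)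

lemma jointSimplex_timeAvg (ht : 0 < t) : JointSimplex (timeAvg x t) := by
  intro k
  have hsum : ∑ i, ∫ s in (0:ℝ)..t, x s k i = t := by
    rw [← intervalIntegral.integral_finsetSum fun i _ =>
      intervalIntegrable_apply_apply hx hxΔ k i]
    rw [intervalIntegral.integral_congr (g := fun _ => (1:ℝ)) fun s hs => (hxΔ s hs k).2]
    simp
  refine ⟨fun i => ?_, ?_⟩
  · exact mul_nonneg (by positivity) <| intervalIntegral.integral_nonneg ht.le fun s hs =>
      (hxΔ s (Set.Icc_subset_uIcc hs) k).1 i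
  · simp only [timeAvg, ← Finset.mul_sum, hsum]
    field_simp

omit hx in
lemma integral_sub_le_regret (k : Fin N) {y : Fin (n k) → ℝ}
    (hy : y ∈ stdSimplex ℝ (Fin (n k))) :
    ∫ s in (0:ℝ)..t, (polyPayoff E A k (Function.update (x s) k y) - polyPayoff E A k (x s))
      ≤ regret E A x k t := by
  -- `regret` is an `sSup`, so the gains must be bounded above: payoffs are bounded on `Δ`.
  obtain ⟨C, hC⟩ := isCompact_setOf_jointSimplex.exists_bound_of_continuousOn
    (continuous_polyPayoff E A k).continuousOn
  refine le_csSup ⟨(C + C) * |t - 0|, ?_⟩ ⟨y, hy, rfl⟩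
  rintro _ ⟨y', hy', rfl⟩
  refine (Real.le_norm_self _).trans <|
    intervalIntegral.norm_integral_le_of_norm_le_const fun s hs => ?_
  have hxs := hxΔ s (Set.uIoc_subset_uIcc hs)
  exact (norm_sub_le _ _).trans (add_le_add (hC _ (hxs.update hy')) (hC _ hxs))

lemma mul_polyPayoff_timeAvg_sub_le_regret (ht : 0 < t) (k : Fin N) :
    t * polyPayoff E A k (timeAvg x t) - ∫ s in (0:ℝ)..t, polyPayoff E A k (x s)
      ≤ regret E A x k t := by
  set z : ℝ → Strat n := fun s => Function.update (x s) k (timeAvg x t k)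
  have hz : Measurable z := measurable_update_left.comp hx
  have hzΔ : ∀ s ∈ Set.uIcc 0 t, JointSimplex (z s) := fun s hs =>
    (hxΔ s hs).update (jointSimplex_timeAvg hx hxΔ ht k)
  have hz_avg : timeAvg z t = timeAvg x t := by
    simp only [z, timeAvg_update_const ht.ne', Function.update_eq_self]
  have hz_int :
      ∫ s in (0:ℝ)..t, polyPayoff E A k (z s) = t * polyPayoff E A k (timeAvg x t) := by
    rw [← hz_avg]
    refine integral_polyPayoff_of_forall_apply_eq E A ht.ne'
      (intervalIntegrable_apply_apply hz hzΔ) fun s => ?_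
    simp [z, hz_avg]
  rw [← hz_int, ← intervalIntegral.integral_sub (intervalIntegrable_polyPayoff E A hz hzΔ k)
    (intervalIntegrable_polyPayoff E A hx hxΔ k)]
  exact integral_sub_le_regret E A hxΔ k (jointSimplex_timeAvg hx hxΔ ht k)

lemma mul_SW_timeAvg_sub_le_sum_regret (ht : 0 < t) :
    t * SW E A (timeAvg x t) - ∫ s in (0:ℝ)..t, SW E A (x s) ≤ ∑ k, regret E A x k t := by
  simp only [SW, Finset.mul_sum]
  rw [intervalIntegral.integral_finsetSum fun k _ => intervalIntegrable_polyPayoff E A hx hxΔ k,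
    ← Finset.sum_sub_distrib]
  exact Finset.sum_le_sum fun k _ => mul_polyPayoff_timeAvg_sub_le_regret E A hx hxΔ ht k

end Trajectory

end PolymatrixGame

theorem regret_bounds_welfare_of_time_average
    {N : ℕ} {n : Fin N → ℕ}
    (E : Finset (Fin N × Fin N))
    (A : ∀ k l, Matrix (Fin (n k)) (Fin (n l)) ℝ)
    (x : ℝ → Strat n) (hxmeas : ∀ k i, Measurable fun s => x s k i)
    (hxΔ : ∀ s : ℝ, 0 ≤ s → JointSimplex (x s))
    (t : ℝ) (ht : 0 < t) :
    SW E A (timeAvg x t) - (1 / t) * ∫ s in (0:ℝ)..t, SW E A (x s)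
        ≤ (1 / t) * ∑ k, regret E A x k t ∧
      SW E A (timeAvg x t) - (1 / t) * ∑ k, regret E A x k t
        ≤ (1 / t) * ∫ s in (0:ℝ)..t, SW E A (x s) := by
  have hx : Measurable x := measurable_pi_lambda _ fun k => measurable_pi_lambda _ (hxmeas k)
  have hxΔ' : ∀ s ∈ Set.uIcc 0 t, JointSimplex (x s) := fun s hs =>
    hxΔ s (by rw [Set.uIcc_of_le ht.le] at hs; exact hs.1)
  have hbound : SW E A (timeAvg x t) - (1 / t) * ∫ s in (0:ℝ)..t, SW E A (x s)
      ≤ (1 / t) * ∑ k, regret E A x k t :=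
    calc SW E A (timeAvg x t) - (1 / t) * ∫ s in (0:ℝ)..t, SW E A (x s)
        = (1 / t) * (t * SW E A (timeAvg x t) - ∫ s in (0:ℝ)..t, SW E A (x s)) := by
          field_simp
      _ ≤ (1 / t) * ∑ k, regret E A x k t := by
          gcongr
          exact mul_SW_timeAvg_sub_le_sum_regret E A hx hxΔ' ht
  exact ⟨hbound, by linarith⟩
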